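/- Let p be a prime and M ≥ 1 an integer, let (λ,θ) ∈ A, and let (λ̃,θ̃) = S₁(λ,θ). If λ̃_{i−1} = λ̃_i for some 2 ≤ i ≤ M, then λ̃_i + θ̃_i ≡ 0 (mod p). -/

import Mathlib

open Function

/-- The state of the Serganova algorithm: a pair `(λ, θ) ∈ ℤ^M × ℤ^{M+1}`.
Indices are 0-based, so the paper's `λ_i` (for `1 ≤ i ≤ M`) is `s.1 ⟨i-1,_⟩`
and the paper's `θ_j` (for `1 ≤ j ≤ M+1`) is `s.2 ⟨j-1,_⟩`. -/
abbrev SState (M : ℕ) := (Fin M → ℤ) × (Fin (M + 1) → ℤ)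

/-- One step of the Serganova algorithm, processing the (0-based) pair `(i, j)`:
if `λ_i + θ_j ≡ 0 (mod p)` nothing changes, otherwise `λ_i` is decreased by `1`
and `θ_j` is increased by `1`. -/
def sStep (p M : ℕ) (ij : Fin M × Fin (M + 1)) (s : SState M) : SState M :=
  if (p : ℤ) ∣ s.1 ij.1 + s.2 ij.2 then s
  else (Function.update s.1 ij.1 (s.1 ij.1 - 1),
        Function.update s.2 ij.2 (s.2 ij.2 + 1))

/-- One step of the inverse algorithm, processing the (0-based) pair `(i, j)`:
if `λ_i + θ_j ≡ 0 (mod p)` nothing changes, otherwise `λ_i` is increased by `1`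
and `θ_j` is decreased by `1`. -/
def tStep (p M : ℕ) (ij : Fin M × Fin (M + 1)) (s : SState M) : SState M :=
  if (p : ℤ) ∣ s.1 ij.1 + s.2 ij.2 then s
  else (Function.update s.1 ij.1 (s.1 ij.1 + 1),
        Function.update s.2 ij.2 (s.2 ij.2 - 1))

/-- Run the Serganova algorithm along a list of pairs. -/
def sRun (p M : ℕ) (l : List (Fin M × Fin (M + 1))) (s : SState M) : SState M :=
  l.foldl (fun s ij => sStep p M ij s) s

/-- Run the inverse algorithm along a list of pairs. -/
def tRun (p M : ℕ) (l : List (Fin M × Fin (M + 1))) (s : SState M) : SState M :=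
  l.foldl (fun s ij => tStep p M ij s) s

/-- The Version 1 order on the pair set `P = {(i,j) : 0 ≤ j ≤ i ≤ M-1}` (0-based):
`j` increasing, and for fixed `j`, `i` decreasing from `M-1` down to `j`.
This is the paper's order `(M,1),(M-1,1),…,(1,1),(M,2),…,(2,2),…,(M,M)`. -/
def order1 (M : ℕ) : List (Fin M × Fin (M + 1)) :=
  (List.finRange M).flatMap fun j =>
    ((List.finRange M).reverse.filter fun i => j ≤ i).map fun i => (i, j.castSucc)

/-- The Version 2 order on the pair set `P` (0-based):
`i` decreasing from `M-1` down to `0`, and for fixed `i`, `j` increasing from `0` to `i`.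
This is the paper's order `(M,1),(M,2),…,(M,M),(M-1,1),…,(M-1,M-1),…,(1,1)`. -/
def order2 (M : ℕ) : List (Fin M × Fin (M + 1)) :=
  (List.finRange M).reverse.flatMap fun i =>
    ((List.finRange M).filter fun j => j ≤ i).map fun j => (i, j.castSucc)

/-- The Serganova map `S₁` (Version 1 order). -/
def S1 (p M : ℕ) (s : SState M) : SState M := sRun p M (order1 M) s

/-- The Serganova map `S₂` (Version 2 order). -/
def S2 (p M : ℕ) (s : SState M) : SState M := sRun p M (order2 M) s

/-- The inverse algorithm `T₁`: inverse steps, pairs processed in reverse Version 1 order. -/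
def T1 (p M : ℕ) (s : SState M) : SState M := tRun p M (order1 M).reverse s

/-- The inverse algorithm `T₂`: inverse steps, pairs processed in reverse Version 2 order. -/
def T2 (p M : ℕ) (s : SState M) : SState M := tRun p M (order2 M).reverse s

/-- The set `A` of dominant pairs: `λ_1 ≥ … ≥ λ_M` and `θ_1 ≥ … ≥ θ_{M+1}`. -/
def domA (M : ℕ) : Set (SState M) := {s | Antitone s.1 ∧ Antitone s.2}

/-- The set `𝕄`: dominant pairs such that (in 1-based terms) for `2 ≤ i ≤ M`,
`λ_{i-1} = λ_i → p ∣ λ_i + θ_i`, and for `1 ≤ i ≤ M`, `θ_i = θ_{i+1} → p ∣ λ_i + θ_i`. -/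
def setM (p M : ℕ) : Set (SState M) :=
  {s | Antitone s.1 ∧ Antitone s.2 ∧
    (∀ (i : ℕ) (hi : i + 1 < M),
      s.1 ⟨i, by omega⟩ = s.1 ⟨i + 1, hi⟩ →
        (p : ℤ) ∣ s.1 ⟨i + 1, hi⟩ + s.2 ⟨i + 1, by omega⟩) ∧
    (∀ (i : ℕ) (hi : i < M),
      s.2 ⟨i, by omega⟩ = s.2 ⟨i + 1, by omega⟩ →
        (p : ℤ) ∣ s.1 ⟨i, hi⟩ + s.2 ⟨i, by omega⟩)}

/-!
Along the Version 1 order, the step `(i+1, i+1)` is the last one touching `λ_i`, `λ_{i+1}` or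
`θ_{i+1}`. Throughout the run `λ` stays antitone, so just before that step `λ_{i+1} ≤ λ_i`; an
active step would leave `λ_{i+1} < λ_i` for good. Hence `λ̃_i = λ̃_{i+1}` forces the step to be
idle, i.e. `λ̃_{i+1} + θ̃_{i+1} ≡ 0 (mod p)`.

Antitonicity survives because, inside a column `j`, the step `(t, j)` is active only when
`λ_t > λ_{t+1}`: the step `(t+1, j)` just before it either lowered `λ_{t+1}` below `λ_t` or found
`λ_{t+1} + θ_j ≡ 0`, and then `λ_t = λ_{t+1}` would make `(t, j)` idle as well.
-/

namespace Serganova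

open List

variable {p M : ℕ}

lemma sStep_of_dvd {ij : Fin M × Fin (M + 1)} {s : SState M}
    (h : (p : ℤ) ∣ s.1 ij.1 + s.2 ij.2) : sStep p M ij s = s := if_pos h

lemma sStep_of_not_dvd {ij : Fin M × Fin (M + 1)} {s : SState M}
    (h : ¬ (p : ℤ) ∣ s.1 ij.1 + s.2 ij.2) :
    sStep p M ij s = (update s.1 ij.1 (s.1 ij.1 - 1), update s.2 ij.2 (s.2 ij.2 + 1)) :=
  if_neg h

lemma sStep_fst_of_ne {ij : Fin M × Fin (M + 1)} {s : SState M} {a : Fin M} (ha : a ≠ ij.1) :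
    (sStep p M ij s).1 a = s.1 a := by
  unfold sStep
  split_ifs <;> simp [ha]

lemma sStep_snd_of_ne {ij : Fin M × Fin (M + 1)} {s : SState M} {b : Fin (M + 1)}
    (hb : b ≠ ij.2) : (sStep p M ij s).2 b = s.2 b := by
  unfold sStep
  split_ifs <;> simp [hb]

lemma sRun_nil (s : SState M) : sRun p M [] s = s := rfl

lemma sRun_cons (ij : Fin M × Fin (M + 1)) (l : List (Fin M × Fin (M + 1))) (s : SState M) :
    sRun p M (ij :: l) s = sRun p M l (sStep p M ij s) := rfl

lemma sRun_append (l₁ l₂ : List (Fin M × Fin (M + 1))) (s : SState M) :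
    sRun p M (l₁ ++ l₂) s = sRun p M l₂ (sRun p M l₁ s) :=
  foldl_append

lemma sRun_fst_of_forall_ne {a : Fin M} :
    ∀ {l : List (Fin M × Fin (M + 1))} {s : SState M}, (∀ ij ∈ l, ij.1 ≠ a) →
      (sRun p M l s).1 a = s.1 a
  | [], _, _ => rfl
  | ij :: l, s, h => by
    rw [sRun_cons, sRun_fst_of_forall_ne fun ij' h' => h ij' (mem_cons_of_mem _ h'),
      sStep_fst_of_ne (h ij mem_cons_self).symm]

lemma sRun_snd_of_forall_ne {b : Fin (M + 1)} :
    ∀ {l : List (Fin M × Fin (M + 1))} {s : SState M}, (∀ ij ∈ l, ij.2 ≠ b) →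
      (sRun p M l s).2 b = s.2 b
  | [], _, _ => rfl
  | ij :: l, s, h => by
    rw [sRun_cons, sRun_snd_of_forall_ne fun ij' h' => h ij' (mem_cons_of_mem _ h'),
      sStep_snd_of_ne (h ij mem_cons_self).symm]

lemma _root_.Antitone.update_sub_one {α : Type*} [PartialOrder α] [LocallyFiniteOrder α]
    [DecidableEq α] {f : α → ℤ} (hf : Antitone f) {t : α} (ht : ∀ u, t ⋖ u → f u < f t) :
    Antitone (update f t (f t - 1)) := by
  refine (antitone_iff_forall_covBy _).2 fun a b hab => ?_
  rcases eq_or_ne a t with rfl | ha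
  · rw [update_self, update_of_ne hab.ne']
    linarith [ht b hab]
  · rw [update_of_ne ha]
    rcases eq_or_ne b t with rfl | hb
    · rw [update_self]
      linarith [hf hab.le]
    · rw [update_of_ne hb]
      exact hf hab.le

/-- The `λ`-condition of the paper's set `𝕄`, for the row `u` against the column `j`. -/
def Settled (p : ℕ) (s : SState M) (u : Fin M) (j : Fin (M + 1)) : Prop :=
  ∀ t, u ⋖ t → s.1 u = s.1 t → (p : ℤ) ∣ s.1 t + s.2 j

lemma antitone_sStep_fst {t : Fin M} {j : Fin (M + 1)} {s : SState M} (hs : Antitone s.1)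
    (ht : Settled p s t j) : Antitone (sStep p M (t, j) s).1 := by
  by_cases hd : (p : ℤ) ∣ s.1 t + s.2 j
  · rwa [sStep_of_dvd hd]
  · rw [sStep_of_not_dvd hd]
    refine hs.update_sub_one fun u htu => (hs htu.le).lt_of_ne fun heq => hd ?_
    simpa [heq] using ht u htu heq.symm

lemma settled_sStep {u t : Fin M} {j : Fin (M + 1)} {s : SState M} (hs : Antitone s.1)
    (hut : u ⋖ t) : Settled p (sStep p M (t, j) s) u j := by
  intro t' hut' heq
  obtain rfl := hut'.unique_right hut
  by_cases hd : (p : ℤ) ∣ s.1 t' + s.2 j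
  · rwa [sStep_of_dvd hd]
  · rw [sStep_of_not_dvd hd] at heq
    simp only [update_self, update_of_ne hut.ne] at heq
    linarith [hs hut.le]

theorem sRun_column {j : Fin (M + 1)} :
    ∀ {rows : List (Fin M)} {s : SState M}, rows.IsChain (fun a b => b ⋖ a) → Antitone s.1 →
      (∀ t ∈ rows.head?, Settled p s t j) →
      Antitone (sRun p M (rows.map (·, j)) s).1 ∧
        ∀ t ∈ rows.getLast?, ∀ u, u ⋖ t → Settled p (sRun p M (rows.map (·, j)) s) u j
  | [], _, _, hs, _ => ⟨hs, by simp⟩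
  | [t], _, _, hs, ht =>
    ⟨antitone_sStep_fst hs (ht t rfl),
      by simpa [sRun_cons, sRun_nil] using fun u => settled_sStep hs⟩
  | t :: u :: rows, _, hc, hs, ht => by
    obtain ⟨hut, hc⟩ := isChain_cons_cons.1 hc
    simpa [sRun_cons] using
      sRun_column hc (antitone_sStep_fst hs (ht t rfl)) (by simpa using settled_sStep hs hut)

def column (M : ℕ) (j : Fin M) : List (Fin M) := (finRange M).reverse.filter fun i => j ≤ i

def columnSteps (M : ℕ) (j : Fin M) : List (Fin M × Fin (M + 1)) :=
  (column M j).map (·, j.castSucc)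

lemma order1_eq_flatMap (M : ℕ) : order1 M = (finRange M).flatMap (columnSteps M) := rfl

lemma mem_column {j t : Fin M} : t ∈ column M j ↔ j ≤ t := by simp [column]

lemma pairwise_column (j : Fin M) : (column M j).Pairwise (· > ·) :=
  (pairwise_reverse.2 (sortedLT_finRange M).pairwise).filter _

lemma map_val_column (j : Fin M) : (column M j).map Fin.val = (Ico j M).reverse := by
  have hfilter : (fun i : Fin M => decide (j ≤ i)) = (fun n => decide (j.val ≤ n)) ∘ Fin.val :=
    rfl
  rw [column, filter_reverse, map_reverse, hfilter, ← filter_map, map_coe_finRange_eq_range,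
    ← Ico.zero_bot, Ico.filter_le, Nat.zero_max]

lemma isChain_column (j : Fin M) : (column M j).IsChain (fun a b => b ⋖ a) := by
  have := (Ico.isChain_succ j M).imp fun a b (h : b = a + 1) => Nat.covBy_iff_add_one_eq.2 h.symm
  rw [← isChain_reverse, ← map_val_column, isChain_map] at this
  exact this.imp fun a b h => Fin.covBy_iff.2 h

lemma isMax_of_mem_head?_column {j t : Fin M} (ht : t ∈ (column M j).head?) : IsMax t := by
  obtain ⟨rows, hrows⟩ := head?_eq_some_iff.1 ht
  intro u htu
  have hu : u ∈ t :: rows :=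
    hrows ▸ mem_column.2 ((mem_column.1 (hrows ▸ mem_cons_self)).trans htu)
  have hpw := hrows ▸ pairwise_column j
  rcases mem_cons.1 hu with rfl | hu
  · exact le_rfl
  · exact (rel_of_pairwise_cons hpw hu).le

lemma getLast?_column (j : Fin M) : (column M j).getLast? = some j := by
  apply Option.map_injective Fin.val_injective
  rw [← getLast?_map, map_val_column, getLast?_reverse, Ico.eq_cons j.isLt]
  rfl

lemma sRun_columnSteps {j : Fin M} {s : SState M} (hs : Antitone s.1) :
    Antitone (sRun p M (columnSteps M j) s).1 ∧
      ∀ u, u ⋖ j → Settled p (sRun p M (columnSteps M j) s) u j.castSucc := by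
  obtain ⟨hanti, hlast⟩ := sRun_column (isChain_column j) hs
    fun _ ht _ htu => absurd htu.lt (isMax_of_mem_head?_column ht).not_lt
  exact ⟨hanti, hlast j (getLast?_column j)⟩

lemma antitone_sRun_flatMap_columnSteps :
    ∀ (L : List (Fin M)) {s : SState M}, Antitone s.1 →
      Antitone (sRun p M (L.flatMap (columnSteps M)) s).1
  | [], _, hs => hs
  | _ :: L, _, hs => by
    rw [flatMap_cons, sRun_append]
    exact antitone_sRun_flatMap_columnSteps L (sRun_columnSteps hs).1

lemma exists_of_mem_flatMap_columnSteps {L : List (Fin M)} {ij : Fin M × Fin (M + 1)}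
    (h : ij ∈ L.flatMap (columnSteps M)) : ∃ j ∈ L, j ≤ ij.1 ∧ ij.2 = j.castSucc := by
  simp only [mem_flatMap, columnSteps, mem_map, mem_column] at h
  obtain ⟨j, hj, t, hjt, rfl⟩ := h
  exact ⟨j, hj, hjt, rfl⟩

lemma sRun_flatMap_columnSteps_fst {L : List (Fin M)} {a : Fin M} (h : ∀ j ∈ L, a < j)
    (s : SState M) : (sRun p M (L.flatMap (columnSteps M)) s).1 a = s.1 a :=
  sRun_fst_of_forall_ne fun _ hij => by
    obtain ⟨j, hj, hji, -⟩ := exists_of_mem_flatMap_columnSteps hij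
    exact ((h j hj).trans_le hji).ne'

lemma sRun_flatMap_columnSteps_snd {L : List (Fin M)} {b : Fin M} (h : ∀ j ∈ L, b < j)
    (s : SState M) : (sRun p M (L.flatMap (columnSteps M)) s).2 b.castSucc = s.2 b.castSucc :=
  sRun_snd_of_forall_ne fun _ hij => by
    obtain ⟨j, hj, -, hj'⟩ := exists_of_mem_flatMap_columnSteps hij
    exact hj' ▸ (Fin.castSucc_lt_castSucc_iff.2 (h j hj)).ne'

end Serganova

open Serganova List

/-- If `(λ̃,θ̃) = S₁(λ,θ)` for a dominant pair `(λ,θ)` and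
`λ̃_{i-1} = λ̃_i` (1-based, `2 ≤ i ≤ M`), then `p ∣ λ̃_i + θ̃_i`. -/
theorem serganova_v1_lambda_congruence (p M : ℕ)
    (s : SState M) (hs : s ∈ domA M) (i : ℕ) (hi : i + 1 < M)
    (h : (S1 p M s).1 ⟨i, by omega⟩ = (S1 p M s).1 ⟨i + 1, hi⟩) :
    (p : ℤ) ∣ (S1 p M s).1 ⟨i + 1, hi⟩ + (S1 p M s).2 ⟨i + 1, by omega⟩ := by
  set j : Fin M := ⟨i + 1, hi⟩
  obtain ⟨L₁, L₂, hsplit⟩ := append_of_mem (mem_finRange j)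
  have hL₂ : ∀ k ∈ L₂, j < k := by
    have := (sortedLT_finRange M).pairwise
    rw [hsplit, pairwise_append, pairwise_cons] at this
    exact this.2.1.1
  have hS1 : S1 p M s = sRun p M (L₂.flatMap (columnSteps M))
      (sRun p M (columnSteps M j) (sRun p M (L₁.flatMap (columnSteps M)) s)) := by
    rw [S1, order1_eq_flatMap, hsplit, flatMap_append, flatMap_cons, sRun_append, sRun_append]
  have hij : (⟨i, by omega⟩ : Fin M) ⋖ j := Fin.covBy_iff.2 (Nat.covBy_iff_add_one_eq.2 rfl)
  have hsettled :=
    (sRun_columnSteps (p := p) (antitone_sRun_flatMap_columnSteps (p := p) L₁ hs.1)).2 _ hij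
  rw [hS1, sRun_flatMap_columnSteps_fst fun k hk => hij.lt.trans (hL₂ k hk),
    sRun_flatMap_columnSteps_fst hL₂] at h
  rw [hS1, sRun_flatMap_columnSteps_fst hL₂,
    show (⟨i + 1, by omega⟩ : Fin (M + 1)) = j.castSucc from rfl, sRun_flatMap_columnSteps_snd hL₂]
  exact hsettled j hij h
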